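/- arXiv:2512.16299 — 2 statements merged into one kernel-verified Lean document; each statement's English description precedes it below -/
import Mathlib

section
/- Let d ≥ 4 and let j_1, ..., j_d be integers with |j_1| > |j_2| ≥ ... ≥ |j_d| and σ_1, ..., σ_d ∈ {-1,1} with σ_1 = 1, σ_2 = -1, satisfying ∑_l σ_l j_l² = 0. If |j_1| ≥ M then M + 1 ≤ |j_1| + |j_2| ≤ j_1² - j_2² ≤ (d-2)·j_3². -/
open Finset

theorem abs_add_abs_le_sq_sub_sq {a b : ℤ} (h : |b| < |a|) : |a| + |b| ≤ a ^ 2 - b ^ 2 := by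
  have hgap : 1 ≤ |a| - |b| := by omega
  calc |a| + |b| ≤ (|a| - |b|) * (|a| + |b|) :=
        le_mul_of_one_le_left (by positivity) hgap
    _ = a ^ 2 - b ^ 2 := by rw [← sq_abs a, ← sq_abs b]; ring

theorem neg_card_mul_sq_le_sum_mul_sq {ι R : Type*} [CommRing R] [LinearOrder R]
    [IsStrictOrderedRing R] (s : Finset ι) (σ x : ι → R) (c : R)
    (hσ : ∀ l ∈ s, -1 ≤ σ l) (hx : ∀ l ∈ s, |x l| ≤ |c|) :
    -(#s * c ^ 2) ≤ ∑ l ∈ s, σ l * x l ^ 2 := by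
  have hterm : ∀ l ∈ s, -c ^ 2 ≤ σ l * x l ^ 2 := fun l hl => by
    have hsq : x l ^ 2 ≤ c ^ 2 := sq_le_sq.mpr (hx l hl)
    nlinarith [hσ l hl, sq_nonneg (x l)]
  simpa [nsmul_eq_mul] using card_nsmul_le_sum s _ _ hterm

theorem sq_sub_sq_le_of_signed_sum_sq_eq_zero {n : ℕ} (x σ : Fin (n + 2) → ℤ) (c : ℤ)
    (hσ : ∀ l, -1 ≤ σ l) (hσ0 : σ 0 = 1) (hσ1 : σ 1 = -1)
    (hx : ∀ i : Fin n, |x i.succ.succ| ≤ |c|) (hres : ∑ l, σ l * x l ^ 2 = 0) :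
    x 0 ^ 2 - x 1 ^ 2 ≤ n * c ^ 2 := by
  rw [Fin.sum_univ_succ, Fin.sum_univ_succ, Fin.succ_zero_eq_one, hσ0, hσ1] at hres
  have htail := neg_card_mul_sq_le_sum_mul_sq univ (fun i : Fin n => σ i.succ.succ)
    (fun i => x i.succ.succ) c (fun i _ => hσ _) (fun i _ => hx i)
  simp only [card_univ, Fintype.card_fin] at htail
  linarith

theorem resonance_strict_largest_case
    (d M : ℕ) (hd : 4 ≤ d)
    (j : Fin d → ℤ) (σ : Fin d → ℤ) (hσ : ∀ l, σ l = 1 ∨ σ l = -1)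
    (hord : ∀ k l : Fin d, k ≤ l → |j l| ≤ |j k|)
    (hstrict : |j ⟨1, by omega⟩| < |j ⟨0, by omega⟩|)
    (hσ1 : σ ⟨0, by omega⟩ = 1) (hσ2 : σ ⟨1, by omega⟩ = -1)
    (hres : ∑ l, σ l * (j l) ^ 2 = 0)
    (hM1 : (M : ℤ) ≤ |j ⟨0, by omega⟩|) :
    (M : ℤ) + 1 ≤ |j ⟨0, by omega⟩| + |j ⟨1, by omega⟩| ∧
    |j ⟨0, by omega⟩| + |j ⟨1, by omega⟩| ≤ (j ⟨0, by omega⟩) ^ 2 - (j ⟨1, by omega⟩) ^ 2 ∧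
    (j ⟨0, by omega⟩) ^ 2 - (j ⟨1, by omega⟩) ^ 2 ≤ ((d : ℤ) - 2) * (j ⟨2, by omega⟩) ^ 2 := by
  obtain ⟨n, rfl⟩ : ∃ n, d = n + 2 := ⟨d - 2, by omega⟩
  have hupper : j ⟨0, by omega⟩ ^ 2 - j ⟨1, by omega⟩ ^ 2 ≤
      ((n + 2 : ℕ) - 2 : ℤ) * j ⟨2, by omega⟩ ^ 2 := by
    push_cast
    rw [add_sub_cancel_right]
    refine sq_sub_sq_le_of_signed_sum_sq_eq_zero j σ _ (fun l => ?_) hσ1 hσ2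
      (fun i => hord _ _ (Fin.mk_le_mk.mpr (by omega))) hres
    rcases hσ l with h | h <;> norm_num [h]
  -- If `j 1` vanished, so would `j 2`, and then `hupper` would force `j 0 = 0`.
  have hj1 : 1 ≤ |j ⟨1, by omega⟩| := by
    by_contra! hj1_lt
    have hj1_zero : j ⟨1, by omega⟩ = 0 := abs_nonpos_iff.mp (by omega)
    have hj2_zero : j ⟨2, by omega⟩ = 0 := by
      have h21 := hord ⟨1, by omega⟩ ⟨2, by omega⟩ (Fin.mk_le_mk.mpr (by omega))
      rwa [hj1_zero, abs_zero, abs_nonpos_iff] at h21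
    rw [hj1_zero, hj2_zero] at hupper
    have hj0_zero : j ⟨0, by omega⟩ = 0 :=
      pow_eq_zero_iff two_ne_zero |>.mp (le_antisymm (by linarith) (sq_nonneg _))
    rw [hj0_zero, hj1_zero] at hstrict
    exact lt_irrefl _ hstrict
  exact ⟨by omega, abs_add_abs_le_sq_sub_sq hstrict, hupper⟩
end

section
/- Let f(x) = (ln x)^θ with θ > 1, defined for x ≥ c with c = e^{c₀} for suitable c₀ > 1. Then there exists C_f < 1 and c large enough (depending on θ and d) such that for all x_1, ..., x_d ≥ c with x_m = max{x_1,...,x_d}: (ln(x_1 + ... + x_d))^θ ≤ (ln x_m)^θ + C_f ∑_{l ≠ m} (ln x_l)^θ. -/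
/-!
Write `φ t = (log t) ^ θ`, so `t * φ' t = θ (log t) ^ (θ - 1)`. For `log t ≥ θ` the function `φ`
lies below its tangent lines, and `φ'` is antitone once `log t ≥ θ - 1`. Hence, with `S = x_m + T`
and `T = ∑_{l ≠ m} x_l`,
`φ S - φ x_m ≤ φ' x_m * T = ∑_{l ≠ m} φ' x_m * x_l ≤ ∑_{l ≠ m} x_l * φ' x_l = ∑_{l ≠ m} θ (log x_l) ^ (θ - 1)`,
and each summand is at most `(log x_l) ^ θ / 2` as soon as `log x_l ≥ 2 θ`.
So `C_f = 1/2` and `c = e ^ (2 θ)` work, independently of `d`.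
-/

open Real Set

namespace Real

theorem rpow_log_add_le {θ x y : ℝ} (hθ : 0 < θ) (hθx : θ ≤ log x) (hx : 0 < x) (hy : 0 ≤ y) :
    log (x + y) ^ θ ≤ log x ^ θ + θ * (log x ^ (θ - 1) / x) * y := by
  set a := log x
  set s := log (1 + y / x)
  have ha : 0 < a := hθ.trans_le hθx
  have hyx : 0 ≤ y / x := div_nonneg hy hx.le
  have hs : 0 ≤ s := log_nonneg (by linarith)
  have hlog : log (x + y) = a + s := by
    rw [← log_mul hx.ne' (by positivity)]
    congr 1
    field_simp
  have hexp : exp s = 1 + y / x := exp_log (by positivity)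
  -- Bernoulli's inequality with the exponent `θ / a ≤ 1`
  have hbernoulli : (1 + s / a) ^ θ ≤ 1 + θ / a * (y / x) :=
    calc (1 + s / a) ^ θ ≤ exp (s / a) ^ θ := by
          gcongr
          linarith [add_one_le_exp (s / a)]
      _ = (1 + y / x) ^ (θ / a) := by rw [← exp_mul, ← hexp, ← exp_mul]; ring_nf
      _ ≤ 1 + θ / a * (y / x) :=
          rpow_one_add_le_one_add_mul_self (by linarith) (by positivity) ((div_le_one ha).2 hθx)
  calc log (x + y) ^ θ = a ^ θ * (1 + s / a) ^ θ := by
        rw [hlog, ← mul_rpow ha.le (by positivity)]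
        congr 1
        field_simp
    _ ≤ a ^ θ * (1 + θ / a * (y / x)) := by gcongr
    _ = a ^ θ + θ * (a ^ (θ - 1) / x) * y := by
        rw [rpow_sub_one ha.ne']
        field_simp

theorem rpow_le_rpow_mul_exp_sub {p a b : ℝ} (hp : 0 ≤ p) (hpb : p ≤ b) (hba : b ≤ a) :
    a ^ p ≤ b ^ p * exp (a - b) := by
  rcases (hp.trans hpb).eq_or_lt with rfl | hb
  · have hp0 : p = 0 := le_antisymm hpb hp
    simp [hp0, one_le_exp (show 0 ≤ a by linarith)]
  calc a ^ p = b ^ p * (1 + (a - b) / b) ^ p := by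
        rw [← mul_rpow hb.le (by positivity)]
        congr 1
        field_simp
        ring
    _ ≤ b ^ p * exp ((a - b) / b) ^ p := by
        gcongr
        linarith [add_one_le_exp ((a - b) / b)]
    _ ≤ b ^ p * exp (a - b) := by
        rw [← exp_mul]
        gcongr
        rw [div_mul_eq_mul_div, div_le_iff₀ hb]
        nlinarith

theorem antitoneOn_log_rpow_div_self {p : ℝ} (hp : 0 ≤ p) :
    AntitoneOn (fun t ↦ log t ^ p / t) (Ici (exp p)) := by
  intro y hy x hx hyx
  have hy0 : 0 < y := (exp_pos p).trans_le hy
  have hx0 : 0 < x := hy0.trans_le hyx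
  have hpy : p ≤ log y := (le_log_iff_exp_le hy0).2 hy
  have hexp : exp (log x - log y) = x / y := by rw [exp_sub, exp_log hx0, exp_log hy0]
  have key := rpow_le_rpow_mul_exp_sub hp hpy (log_le_log hy0 hyx)
  rw [hexp] at key
  simp only
  rw [div_le_div_iff₀ hx0 hy0]
  calc log x ^ p * y ≤ log y ^ p * (x / y) * y := by gcongr
    _ = log y ^ p * x := by field_simp

end Real

theorem mul_rpow_sub_one_le_of_le {θ ε b : ℝ} (hb : 0 < b) (h : θ ≤ ε * b) :
    θ * b ^ (θ - 1) ≤ ε * b ^ θ :=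
  calc θ * b ^ (θ - 1) ≤ ε * b * b ^ (θ - 1) := by gcongr
    _ = ε * b ^ θ := by rw [rpow_sub_one hb.ne']; field_simp

theorem log_weight_admissible_general (θ : ℝ) (hθ : 1 < θ) (d : ℕ) :
    ∃ Cf : ℝ, Cf < 1 ∧ ∃ c : ℝ, 1 < c ∧
      ∀ (x : Fin d → ℝ), (∀ l, c ≤ x l) →
        ∀ m : Fin d, (∀ l, x l ≤ x m) →
          (Real.log (∑ l, x l)) ^ θ ≤
            (Real.log (x m)) ^ θ + Cf * ∑ l ∈ Finset.univ.erase m, (Real.log (x l)) ^ θ := by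
  refine ⟨1 / 2, by norm_num, exp (2 * θ), one_lt_exp_iff.2 (by linarith), fun x hc m hmax ↦ ?_⟩
  have hpos l : 0 < x l := (exp_pos _).trans_le (hc l)
  have hlog l : 2 * θ ≤ log (x l) := (le_log_iff_exp_le (hpos l)).2 (hc l)
  have hc' : exp (θ - 1) ≤ exp (2 * θ) := exp_le_exp.2 (by linarith)
  have hslope l : θ * (log (x m) ^ (θ - 1) / x m) * x l ≤ θ * log (x l) ^ (θ - 1) := by
    have hanti := antitoneOn_log_rpow_div_self (by linarith) (hc'.trans (hc l))
      (hc'.trans (hc m)) (hmax l)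
    calc θ * (log (x m) ^ (θ - 1) / x m) * x l ≤ θ * (log (x l) ^ (θ - 1) / x l) * x l := by
          gcongr; exact (hpos l).le
      _ = θ * log (x l) ^ (θ - 1) := by field_simp [(hpos l).ne']
  rw [← Finset.add_sum_erase _ _ (Finset.mem_univ m), Finset.mul_sum]
  calc log (x m + ∑ l ∈ Finset.univ.erase m, x l) ^ θ
      ≤ log (x m) ^ θ + ∑ l ∈ Finset.univ.erase m, θ * (log (x m) ^ (θ - 1) / x m) * x l := by
        rw [← Finset.mul_sum]
        exact rpow_log_add_le (by linarith) (by linarith [hlog m]) (hpos m)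
          (Finset.sum_nonneg fun l _ ↦ (hpos l).le)
    _ ≤ log (x m) ^ θ + ∑ l ∈ Finset.univ.erase m, θ * log (x l) ^ (θ - 1) :=
        add_le_add le_rfl (Finset.sum_le_sum fun l _ ↦ hslope l)
    _ ≤ log (x m) ^ θ + ∑ l ∈ Finset.univ.erase m, 1 / 2 * log (x l) ^ θ :=
        add_le_add le_rfl (Finset.sum_le_sum fun l _ ↦
          mul_rpow_sub_one_le_of_le (by linarith [hlog l]) (by linarith [hlog l]))

theorem log_weight_admissible (θ : ℝ) (hθ : 1 < θ) (d : ℕ) (hd : 2 ≤ d) :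
    ∃ Cf : ℝ, Cf < 1 ∧ ∃ c : ℝ, 1 < c ∧
      ∀ (x : Fin d → ℝ), (∀ l, c ≤ x l) →
        ∀ m : Fin d, (∀ l, x l ≤ x m) →
          (Real.log (∑ l, x l)) ^ θ ≤
            (Real.log (x m)) ^ θ + Cf * ∑ l ∈ Finset.univ.erase m, (Real.log (x l)) ^ θ :=
  log_weight_admissible_general θ hθ d
end
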